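/- arXiv:1906.01333 — 3 statements merged into one kernel-verified Lean document; each statement's English description precedes it below -/
import Mathlib

section
/- Let Ω₁, Ω₂ be compact subsets of Euclidean spaces and π ∈ L log L(Ω₁ × Ω₂). Then the marginal (P₂)_#π(x₂) = ∫_{Ω₁} π(x₁,x₂) dx₁ belongs to L log L(Ω₂), and its Luxemburg norm satisfies ‖(P₂)_#π‖_{Φ_log} ≤ max(1, L(Ω₁)) · ‖π‖_{Φ_log}. -/
open MeasureTheory

/-- `log⁺(x) = max (log x) 0`. -/
noncomputable def logPlus (x : ℝ) : ℝ := max (Real.log x) 0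

/-- The Young function `Φ_log(s) = s log⁺ s`. -/
noncomputable def PhiLog (s : ℝ) : ℝ := s * logPlus s

/-- The Luxemburg norm `‖f‖_Φ = inf { γ > 0 : ∫ Φ(|f|/γ) dμ ≤ 1 }`. -/
noncomputable def luxemburgNorm {X : Type*} [MeasurableSpace X] (Φ : ℝ → ℝ)
    (μ : Measure X) (f : X → ℝ) : ℝ :=
  sInf {γ : ℝ | 0 < γ ∧ ∫⁻ x, ENNReal.ofReal (Φ (|f x| / γ)) ∂μ ≤ 1}

/-!
Write `m(x₂) = ∫_{Ω₁} π(x₁, x₂) dx₁`. Then `|m(x₂)|` is at most `L(Ω₁)` times the average of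
`|π(·, x₂)|` over `Ω₁`, so Jensen's inequality for the convex increasing function `Φ_log`, combined
with `Φ_log(ℓ s) ≤ ℓ Φ_log(s)` for `ℓ ≤ 1`, gives `Φ_log(|m| / (c γ)) ≤ c⁻¹ ∫_{Ω₁} Φ_log(|π| / γ)`
for every `c ≥ L(Ω₁)`. Integrating in `x₂` with `c = max(1, L(Ω₁))` turns every admissible `γ`
for `π` into the admissible `c γ` for `m`, which is the norm bound. Membership of `m` in `L log L`
follows from the case `γ = 1` and `Φ_log(c s) ≤ Φ_log(c) s + c Φ_log(s)`, because `m` is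
integrable: `Φ_log`-integrability implies integrability on sets of finite measure.
-/

lemma logPlus_nonneg (x : ℝ) : 0 ≤ logPlus x := le_max_right _ _

lemma logPlus_le_logPlus {a b : ℝ} (ha : 0 ≤ a) (hab : a ≤ b) : logPlus a ≤ logPlus b := by
  rcases ha.eq_or_lt with rfl | ha
  · simp [logPlus]
  · exact max_le_max (Real.log_le_log ha hab) le_rfl

lemma logPlus_mul_le {a b : ℝ} (ha : 0 ≤ a) (hb : 0 ≤ b) :
    logPlus (a * b) ≤ logPlus a + logPlus b := by
  rcases ha.eq_or_lt with rfl | ha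
  · simp [logPlus]
  rcases hb.eq_or_lt with rfl | hb
  · simp [logPlus]
  rw [logPlus, Real.log_mul ha.ne' hb.ne']
  exact max_le (add_le_add (le_max_left _ _) (le_max_left _ _))
    (add_nonneg (logPlus_nonneg a) (logPlus_nonneg b))

lemma phiLog_nonneg {x : ℝ} (hx : 0 ≤ x) : 0 ≤ PhiLog x :=
  mul_nonneg hx (logPlus_nonneg x)

lemma phiLog_le_phiLog {a b : ℝ} (ha : 0 ≤ a) (hab : a ≤ b) : PhiLog a ≤ PhiLog b :=
  mul_le_mul hab (logPlus_le_logPlus ha hab) (logPlus_nonneg a) (ha.trans hab)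

lemma phiLog_mul_le {a b : ℝ} (ha : 0 ≤ a) (hb : 0 ≤ b) :
    PhiLog (a * b) ≤ PhiLog a * b + a * PhiLog b := by
  calc PhiLog (a * b) ≤ a * b * (logPlus a + logPlus b) :=
        mul_le_mul_of_nonneg_left (logPlus_mul_le ha hb) (mul_nonneg ha hb)
    _ = PhiLog a * b + a * PhiLog b := by simp only [PhiLog]; ring

lemma phiLog_mul_le_mul_phiLog {l t : ℝ} (hl₀ : 0 ≤ l) (hl₁ : l ≤ 1) (ht : 0 ≤ t) :
    PhiLog (l * t) ≤ l * PhiLog t := by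
  have hlt : l * t ≤ t := mul_le_of_le_one_left ht hl₁
  calc PhiLog (l * t) ≤ l * t * logPlus t :=
        mul_le_mul_of_nonneg_left (logPlus_le_logPlus (mul_nonneg hl₀ ht) hlt) (mul_nonneg hl₀ ht)
    _ = l * PhiLog t := by rw [PhiLog]; ring

lemma phiLog_eqOn_Ici : Set.EqOn PhiLog (fun x => max (x * Real.log x) 0) (Set.Ici 0) := by
  intro x hx
  rw [PhiLog, logPlus, mul_max_of_nonneg _ _ hx, mul_zero]

lemma convexOn_phiLog : ConvexOn ℝ (Set.Ici 0) PhiLog :=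
  (Real.convexOn_mul_log.sup (convexOn_const 0 (convex_Ici 0))).congr phiLog_eqOn_Ici.symm

lemma continuousOn_phiLog : ContinuousOn PhiLog (Set.Ici 0) :=
  (Real.continuous_mul_log.max continuous_const).continuousOn.congr phiLog_eqOn_Ici

lemma measurable_phiLog : Measurable PhiLog :=
  measurable_id.mul (Real.measurable_log.max measurable_const)

lemma le_exp_one_add_phiLog {t : ℝ} (ht : 0 ≤ t) : t ≤ Real.exp 1 + PhiLog t := by
  rcases le_or_gt t (Real.exp 1) with h | h
  · linarith [phiLog_nonneg ht]
  · have hlog : 1 ≤ logPlus t :=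
      le_max_of_le_left ((Real.le_log_iff_exp_le ((Real.exp_pos 1).trans h)).mpr h.le)
    have : t ≤ PhiLog t := le_mul_of_one_le_right ht hlog
    linarith [Real.exp_pos 1]

section Integral

variable {α : Type*} [MeasurableSpace α] {μ : Measure α}

lemma lintegral_abs_le_lintegral_phiLog (f : α → ℝ) :
    ∫⁻ x, ENNReal.ofReal |f x| ∂μ ≤
      ENNReal.ofReal (Real.exp 1) * μ Set.univ + ∫⁻ x, ENNReal.ofReal (PhiLog |f x|) ∂μ := by
  calc ∫⁻ x, ENNReal.ofReal |f x| ∂μ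
      ≤ ∫⁻ x, (ENNReal.ofReal (Real.exp 1) + ENNReal.ofReal (PhiLog |f x|)) ∂μ := by
        refine lintegral_mono fun x => ?_
        rw [← ENNReal.ofReal_add (Real.exp_pos 1).le (phiLog_nonneg (abs_nonneg _))]
        exact ENNReal.ofReal_le_ofReal (le_exp_one_add_phiLog (abs_nonneg _))
    _ = _ := by rw [lintegral_add_left measurable_const, lintegral_const]

lemma integrable_of_lintegral_phiLog_lt_top [IsFiniteMeasure μ] {f : α → ℝ}
    (hf : AEStronglyMeasurable f μ) (hΦ : ∫⁻ x, ENNReal.ofReal (PhiLog |f x|) ∂μ < ⊤) :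
    Integrable f μ := by
  refine ⟨hf, ?_⟩
  rw [hasFiniteIntegral_iff_norm]
  refine (lintegral_abs_le_lintegral_phiLog f).trans_lt ?_
  exact ENNReal.add_lt_top.mpr
    ⟨ENNReal.mul_lt_top ENNReal.ofReal_lt_top (measure_lt_top _ _), hΦ⟩

lemma lintegral_phiLog_lt_top_of_integrable {f : α → ℝ} (hf : Integrable f μ) {c : ℝ}
    (hc : 0 < c) (hΦ : ∫⁻ x, ENNReal.ofReal (PhiLog (|f x| / c)) ∂μ < ⊤) :
    ∫⁻ x, ENNReal.ofReal (PhiLog |f x|) ∂μ < ⊤ := by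
  have hsplit : ∀ x, ENNReal.ofReal (PhiLog |f x|) ≤
      ENNReal.ofReal (PhiLog c / c) * ENNReal.ofReal |f x|
        + ENNReal.ofReal c * ENNReal.ofReal (PhiLog (|f x| / c)) := fun x => by
    have hfc : 0 ≤ |f x| / c := div_nonneg (abs_nonneg _) hc.le
    have h := phiLog_mul_le hc.le hfc
    rw [mul_div_cancel₀ _ hc.ne'] at h
    have hΦc : 0 ≤ PhiLog c / c := div_nonneg (phiLog_nonneg hc.le) hc.le
    rw [← ENNReal.ofReal_mul hΦc, ← ENNReal.ofReal_mul hc.le, ← ENNReal.ofReal_add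
      (mul_nonneg hΦc (abs_nonneg _)) (mul_nonneg hc.le (phiLog_nonneg hfc))]
    exact ENNReal.ofReal_le_ofReal (by convert h using 2; ring)
  have hf₁ : ∫⁻ x, ENNReal.ofReal |f x| ∂μ < ⊤ := by
    simpa only [Real.norm_eq_abs] using (hasFiniteIntegral_iff_norm f).mp hf.2
  calc ∫⁻ x, ENNReal.ofReal (PhiLog |f x|) ∂μ
      ≤ ∫⁻ x, (ENNReal.ofReal (PhiLog c / c) * ENNReal.ofReal |f x|
          + ENNReal.ofReal c * ENNReal.ofReal (PhiLog (|f x| / c))) ∂μ := lintegral_mono hsplit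
    _ = ENNReal.ofReal (PhiLog c / c) * ∫⁻ x, ENNReal.ofReal |f x| ∂μ
          + ENNReal.ofReal c * ∫⁻ x, ENNReal.ofReal (PhiLog (|f x| / c)) ∂μ := by
        rw [lintegral_add_left' (hf.aemeasurable.abs.ennreal_ofReal.const_mul _),
          lintegral_const_mul' _ _ ENNReal.ofReal_ne_top,
          lintegral_const_mul' _ _ ENNReal.ofReal_ne_top]
    _ < ⊤ := ENNReal.add_lt_top.mpr ⟨ENNReal.mul_lt_top ENNReal.ofReal_lt_top hf₁,
        ENNReal.mul_lt_top ENNReal.ofReal_lt_top hΦ⟩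

lemma exists_lintegral_phiLog_div_le_one {f : α → ℝ}
    (hΦ : ∫⁻ x, ENNReal.ofReal (PhiLog |f x|) ∂μ < ⊤) :
    ∃ γ > 0, ∫⁻ x, ENNReal.ofReal (PhiLog (|f x| / γ)) ∂μ ≤ 1 := by
  set J := (∫⁻ x, ENNReal.ofReal (PhiLog |f x|) ∂μ).toReal
  have hJ : 0 ≤ J := ENNReal.toReal_nonneg
  have hγ : 1 ≤ J + 1 := by linarith
  have hγinv : 0 ≤ (J + 1)⁻¹ := by positivity
  refine ⟨J + 1, by positivity, ?_⟩
  calc ∫⁻ x, ENNReal.ofReal (PhiLog (|f x| / (J + 1))) ∂μ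
      ≤ ∫⁻ x, ENNReal.ofReal (J + 1)⁻¹ * ENNReal.ofReal (PhiLog |f x|) ∂μ := by
        refine lintegral_mono fun x => ?_
        rw [← ENNReal.ofReal_mul hγinv, div_eq_inv_mul]
        exact ENNReal.ofReal_le_ofReal
          (phiLog_mul_le_mul_phiLog hγinv (inv_le_one_of_one_le₀ hγ) (abs_nonneg _))
    _ = ENNReal.ofReal ((J + 1)⁻¹ * J) := by
        rw [lintegral_const_mul' _ _ ENNReal.ofReal_ne_top, ENNReal.ofReal_mul hγinv,
          ENNReal.ofReal_toReal hΦ.ne]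
    _ ≤ 1 := ENNReal.ofReal_le_one.mpr <| by
        rw [inv_mul_le_one₀ (by positivity)]
        linarith

lemma phiLog_abs_integral_div_le [IsFiniteMeasure μ] {f : α → ℝ} (hf : Integrable f μ)
    (hΦf : Integrable (fun x => PhiLog |f x|) μ) {c : ℝ} (hc : 0 < c)
    (hμc : μ.real Set.univ ≤ c) :
    PhiLog (|∫ x, f x ∂μ| / c) ≤ c⁻¹ * ∫ x, PhiLog |f x| ∂μ := by
  rcases eq_zero_or_neZero μ with rfl | _
  · simp [PhiLog, logPlus]
  have hl : 0 < μ.real Set.univ := measureReal_univ_pos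
  have hjensen : PhiLog (⨍ x, |f x| ∂μ) ≤ ⨍ x, PhiLog |f x| ∂μ :=
    convexOn_phiLog.map_average_le continuousOn_phiLog isClosed_Ici
      (.of_forall fun x => abs_nonneg (f x)) hf.abs hΦf
  have havg_nonneg : 0 ≤ ⨍ x, |f x| ∂μ := by
    rw [average_eq]; exact smul_nonneg (by positivity) (integral_nonneg fun _ => abs_nonneg _)
  calc PhiLog (|∫ x, f x ∂μ| / c)
      ≤ PhiLog (μ.real Set.univ / c * ⨍ x, |f x| ∂μ) := by
        refine phiLog_le_phiLog (by positivity) ?_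
        have hcancel : μ.real Set.univ / c * ((μ.real Set.univ)⁻¹ * ∫ x, |f x| ∂μ) =
            (∫ x, |f x| ∂μ) / c := by field_simp
        rw [average_eq, smul_eq_mul, hcancel]
        gcongr
        exact abs_integral_le_integral_abs
    _ ≤ μ.real Set.univ / c * PhiLog (⨍ x, |f x| ∂μ) :=
        phiLog_mul_le_mul_phiLog (by positivity) ((div_le_one hc).mpr hμc) havg_nonneg
    _ ≤ μ.real Set.univ / c * ⨍ x, PhiLog |f x| ∂μ := by gcongr
    _ = c⁻¹ * ∫ x, PhiLog |f x| ∂μ := by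
        rw [average_eq, smul_eq_mul]
        field_simp

lemma ofReal_phiLog_abs_integral_div_le [IsFiniteMeasure μ] (f : α → ℝ) {c : ℝ} (hc : 0 < c)
    (hμc : μ.real Set.univ ≤ c) :
    ENNReal.ofReal (PhiLog (|∫ x, f x ∂μ| / c)) ≤
      ENNReal.ofReal c⁻¹ * ∫⁻ x, ENNReal.ofReal (PhiLog |f x|) ∂μ := by
  by_cases hf : Integrable f μ
  swap
  · simp [integral_undef hf, PhiLog]
  have hΦnn : ∀ x, 0 ≤ PhiLog |f x| := fun x => phiLog_nonneg (abs_nonneg _)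
  by_cases hΦf : Integrable (fun x => PhiLog |f x|) μ
  swap
  · have hΦm : AEStronglyMeasurable (fun x => PhiLog |f x|) μ :=
      (measurable_phiLog.comp_aemeasurable hf.aemeasurable.abs).aestronglyMeasurable
    have htop : ∫⁻ x, ENNReal.ofReal (PhiLog |f x|) ∂μ = ⊤ := by
      by_contra h
      exact hΦf ⟨hΦm,
        (hasFiniteIntegral_iff_ofReal (.of_forall hΦnn)).mpr (lt_top_iff_ne_top.mpr h)⟩
    rw [htop, ENNReal.mul_top (by simpa using hc)]
    exact le_top
  rw [← ofReal_integral_eq_lintegral_ofReal hΦf (.of_forall hΦnn),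
    ← ENNReal.ofReal_mul (by positivity)]
  exact ENNReal.ofReal_le_ofReal (phiLog_abs_integral_div_le hf hΦf hc hμc)

end Integral

lemma lintegral_phiLog_integral_div_le {X Y : Type*} [MeasurableSpace X] [MeasurableSpace Y]
    {μ : Measure X} {ν : Measure Y} [IsFiniteMeasure μ] [SFinite ν] {π : X × Y → ℝ}
    (hπ : AEMeasurable π (μ.prod ν)) {c : ℝ} (hc : 0 < c) (hμc : μ.real Set.univ ≤ c) :
    ∫⁻ y, ENNReal.ofReal (PhiLog (|∫ x, π (x, y) ∂μ| / c)) ∂ν ≤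
      ENNReal.ofReal c⁻¹ * ∫⁻ p, ENNReal.ofReal (PhiLog |π p|) ∂(μ.prod ν) := by
  rw [lintegral_prod_symm (fun p => ENNReal.ofReal (PhiLog |π p|))
      (measurable_phiLog.comp_aemeasurable hπ.abs).ennreal_ofReal,
    ← lintegral_const_mul' _ _ ENNReal.ofReal_ne_top]
  exact lintegral_mono fun y => ofReal_phiLog_abs_integral_div_le _ hc hμc

lemma luxemburgNorm_le_mul {X Y : Type*} [MeasurableSpace X] [MeasurableSpace Y] (Φ : ℝ → ℝ)
    {μ : Measure X} {ν : Measure Y} {f : X → ℝ} {g : Y → ℝ} {c : ℝ} (hc : 0 < c)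
    (hf : ∃ γ > 0, ∫⁻ x, ENNReal.ofReal (Φ (|f x| / γ)) ∂μ ≤ 1)
    (hfg : ∀ γ > 0, ∫⁻ x, ENNReal.ofReal (Φ (|f x| / γ)) ∂μ ≤ 1 →
      ∫⁻ y, ENNReal.ofReal (Φ (|g y| / (c * γ))) ∂ν ≤ 1) :
    luxemburgNorm Φ ν g ≤ c * luxemburgNorm Φ μ f := by
  rw [luxemburgNorm, luxemburgNorm, ← smul_eq_mul, ← Real.sInf_smul_of_nonneg hc.le]
  obtain ⟨γ, hγ, hγf⟩ := hf
  refine csInf_le_csInf ⟨0, fun γ hγ => hγ.1.le⟩ ⟨c * γ, γ, ⟨hγ, hγf⟩, rfl⟩ ?_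
  rintro _ ⟨γ, ⟨hγ, hγf⟩, rfl⟩
  exact ⟨mul_pos hc hγ, hfg γ hγ hγf⟩

/-- If `π ∈ L log L(Ω₁ × Ω₂)` (`Ω₁, Ω₂` compact), then the marginal
`(P₂)_# π (x₂) = ∫_{Ω₁} π(x₁,x₂) dx₁` belongs to `L log L(Ω₂)` and
`‖(P₂)_# π‖_{Φ_log} ≤ max(1, L(Ω₁)) ‖π‖_{Φ_log}`. -/
theorem marginal_mem_LlogL (n₁ n₂ : ℕ)
    (Ω₁ : Set (Fin n₁ → ℝ)) (Ω₂ : Set (Fin n₂ → ℝ))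
    (hΩ₁ : IsCompact Ω₁) (hΩ₂ : IsCompact Ω₂)
    (π : (Fin n₁ → ℝ) × (Fin n₂ → ℝ) → ℝ) (hπ : Measurable π)
    (hπL : ∫⁻ p in Ω₁ ×ˢ Ω₂, ENNReal.ofReal (|π p| * logPlus |π p|) < ⊤) :
    (∫⁻ x₂ in Ω₂, ENNReal.ofReal
        (|∫ x₁ in Ω₁, π (x₁, x₂)| * logPlus |∫ x₁ in Ω₁, π (x₁, x₂)|) < ⊤) ∧
    luxemburgNorm PhiLog (volume.restrict Ω₂) (fun x₂ => ∫ x₁ in Ω₁, π (x₁, x₂)) ≤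
      max 1 (volume Ω₁).toReal *
        luxemburgNorm PhiLog (volume.restrict (Ω₁ ×ˢ Ω₂)) π := by
  set μ₁ := volume.restrict Ω₁
  set μ₂ := volume.restrict Ω₂
  have : IsFiniteMeasure μ₁ := isFiniteMeasure_restrict.2 hΩ₁.measure_lt_top.ne
  have : IsFiniteMeasure μ₂ := isFiniteMeasure_restrict.2 hΩ₂.measure_lt_top.ne
  have hprod : volume.restrict (Ω₁ ×ˢ Ω₂) = μ₁.prod μ₂ := by
    rw [Measure.prod_restrict, ← Measure.volume_eq_prod]
  rw [hprod] at hπL ⊢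
  set c := max 1 (volume Ω₁).toReal
  have hc : 0 < c := lt_max_of_lt_left one_pos
  have hμ₁c : μ₁.real Set.univ ≤ c := by
    rw [measureReal_def, Measure.restrict_apply_univ]; exact le_max_right _ _
  refine ⟨lintegral_phiLog_lt_top_of_integrable ?_ hc ?_, luxemburgNorm_le_mul PhiLog hc
    (exists_lintegral_phiLog_div_le_one hπL) fun γ hγ hπγ => ?_⟩
  · exact (integrable_of_lintegral_phiLog_lt_top hπ.aestronglyMeasurable hπL).integral_prod_right
  · exact (lintegral_phiLog_integral_div_le hπ.aemeasurable hc hμ₁c).trans_lt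
      (ENNReal.mul_lt_top ENNReal.ofReal_lt_top hπL)
  calc _ = ∫⁻ x₂, ENNReal.ofReal (PhiLog (|∫ x₁, π (x₁, x₂) / γ ∂μ₁| / c)) ∂μ₂ := by
        simp_rw [integral_div, abs_div, abs_of_pos hγ, div_div, mul_comm γ]
    _ ≤ ENNReal.ofReal c⁻¹ * ∫⁻ p, ENNReal.ofReal (PhiLog (|π p| / γ)) ∂μ₁.prod μ₂ := by
        simpa only [abs_div, abs_of_pos hγ] using
          lintegral_phiLog_integral_div_le (hπ.div_const γ).aemeasurable hc hμ₁c
    _ ≤ ENNReal.ofReal c⁻¹ * 1 := by gcongr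
    _ ≤ 1 := by
        rw [mul_one, ENNReal.ofReal_le_one]; exact inv_le_one_of_one_le₀ (le_max_left _ _)
end

section
/- Let Ω₁, Ω₂ be compact subsets of Euclidean spaces with positive Lebesgue measure. If α ⊕ β ∈ L_exp(Ω₁ × Ω₂), where (α ⊕ β)(x₁,x₂) = α(x₁) + β(x₂), then α ∈ L_exp(Ω₁) and β ∈ L_exp(Ω₂). -/
/-!
By Tonelli, `∫∫ Φ_exp(|α(x) + β(y)|/γ) dx dy ≤ 1` forces `∫ Φ_exp(|α(x) + β(y₀)|/γ) dx < ∞` for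
some `y₀`, as `Ω₂` is not null. Since `Φ_exp(s + t) ≤ e^(t+1) (Φ_exp(s) + 1)` and `Ω₁` has finite
measure, removing the constant `β(y₀)` keeps this integral finite. Finally a finite modular
`∫ Φ_exp(|α|/γ)` becomes `≤ 1` after enlarging `γ`, by dominated convergence.
-/

open MeasureTheory Filter Topology

noncomputable def PhiExp (s : ℝ) : ℝ := if s ≤ 1 then s else Real.exp (s - 1)

/-- Membership in the Orlicz space `L_exp`: finiteness of the Luxemburg norm,
i.e. `∃ γ > 0` with `∫ Φ_exp(|f|/γ) dμ ≤ 1`. -/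
def MemLexp {X : Type*} [MeasurableSpace X] (μ : Measure X) (f : X → ℝ) : Prop :=
  ∃ γ : ℝ, 0 < γ ∧ ∫⁻ x, ENNReal.ofReal (PhiExp (|f x| / γ)) ∂μ ≤ 1

lemma continuous_phiExp : Continuous PhiExp :=
  continuous_id.if_le (by fun_prop) continuous_id continuous_const
    fun s hs => by simp [hs]

lemma measurable_phiExp : Measurable PhiExp :=
  continuous_phiExp.measurable

lemma Measurable.phiExp_abs_div {X : Type*} [MeasurableSpace X] {f : X → ℝ} (hf : Measurable f)
    (γ : ℝ) : Measurable fun x => ENNReal.ofReal (PhiExp (|f x| / γ)) :=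
  (measurable_phiExp.comp (hf.abs.div_const γ)).ennreal_ofReal

lemma monotone_phiExp : Monotone PhiExp := by
  intro a b hab
  unfold PhiExp
  split_ifs with ha hb hb
  · exact hab
  · exact ha.trans (Real.one_le_exp (by linarith))
  · linarith
  · exact Real.exp_le_exp.2 (by linarith)

lemma phiExp_nonneg {s : ℝ} (hs : 0 ≤ s) : 0 ≤ PhiExp s := by
  unfold PhiExp
  split_ifs
  exacts [hs, (Real.exp_pos _).le]

lemma phiExp_le_exp (s : ℝ) : PhiExp s ≤ Real.exp s := by
  unfold PhiExp
  split_ifs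
  · linarith [Real.add_one_le_exp s]
  · exact Real.exp_le_exp.2 (by linarith)

lemma exp_le_exp_one_mul_phiExp_add_one {s : ℝ} (hs : 0 ≤ s) :
    Real.exp s ≤ Real.exp 1 * (PhiExp s + 1) := by
  unfold PhiExp
  split_ifs with h
  · nlinarith [Real.exp_le_exp.2 h, Real.exp_pos 1]
  · rw [mul_add, ← Real.exp_add, add_sub_cancel]
    linarith [Real.exp_pos 1]

lemma phiExp_add_le {s : ℝ} (hs : 0 ≤ s) (t : ℝ) :
    PhiExp (s + t) ≤ Real.exp (t + 1) * (PhiExp s + 1) :=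
  calc PhiExp (s + t) ≤ Real.exp t * Real.exp s := by
        rw [← Real.exp_add, add_comm t]; exact phiExp_le_exp _
    _ ≤ Real.exp t * (Real.exp 1 * (PhiExp s + 1)) := by
        gcongr; exact exp_le_exp_one_mul_phiExp_add_one hs
    _ = Real.exp (t + 1) * (PhiExp s + 1) := by rw [Real.exp_add]; ring

section Modular

variable {X : Type*} [MeasurableSpace X] {μ : Measure X} {f : X → ℝ}

noncomputable def expModular (μ : Measure X) (f : X → ℝ) (γ : ℝ) : ENNReal :=
  ∫⁻ x, ENNReal.ofReal (PhiExp (|f x| / γ)) ∂μ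

lemma tendsto_expModular_atTop (hf : Measurable f) {γ : ℝ} (hγ : 0 < γ)
    (hfin : expModular μ f γ ≠ ⊤) : Tendsto (expModular μ f) atTop (𝓝 0) := by
  have hlim : ∀ x, Tendsto (fun t => ENNReal.ofReal (PhiExp (|f x| / t))) atTop (𝓝 0) := by
    intro x
    have h := ENNReal.continuous_ofReal.tendsto _ |>.comp <| continuous_phiExp.tendsto 0 |>.comp <|
      (tendsto_const_nhds (x := |f x|)).div_atTop tendsto_id
    simpa [PhiExp, Function.comp_def] using h
  have hbound : ∀ᶠ t in atTop, ∀ᵐ x ∂μ,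
      ENNReal.ofReal (PhiExp (|f x| / t)) ≤ ENNReal.ofReal (PhiExp (|f x| / γ)) := by
    filter_upwards [eventually_ge_atTop γ] with t ht
    exact ae_of_all _ fun x => ENNReal.ofReal_le_ofReal <|
      monotone_phiExp <| div_le_div_of_nonneg_left (abs_nonneg _) hγ ht
  have h := tendsto_lintegral_filter_of_dominated_convergence _
    (Eventually.of_forall fun t => hf.phiExp_abs_div t) hbound hfin (ae_of_all _ hlim)
  rwa [lintegral_zero] at h

lemma memLexp_of_expModular_ne_top (hf : Measurable f) {γ : ℝ} (hγ : 0 < γ)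
    (hfin : expModular μ f γ ≠ ⊤) : MemLexp μ f :=
  ((tendsto_expModular_atTop hf hγ hfin).eventually (eventually_le_nhds zero_lt_one)
    |>.and (eventually_gt_atTop 0)).exists.imp fun _ h => ⟨h.2, h.1⟩

lemma expModular_ne_top_of_add_const [IsFiniteMeasure μ] (c : ℝ) {γ : ℝ} (hγ : 0 < γ)
    (hfin : expModular μ (fun x => f x + c) γ ≠ ⊤) : expModular μ f γ ≠ ⊤ := by
  set K := ENNReal.ofReal (Real.exp (|c| / γ + 1))
  have hpoint : ∀ x, ENNReal.ofReal (PhiExp (|f x| / γ)) ≤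
      K * (ENNReal.ofReal (PhiExp (|f x + c| / γ)) + 1) := by
    intro x
    have hshift : |f x| / γ ≤ |f x + c| / γ + |c| / γ := by
      rw [← add_div]
      gcongr
      simpa using abs_sub_le (f x + c) 0 c
    calc ENNReal.ofReal (PhiExp (|f x| / γ))
        ≤ ENNReal.ofReal (Real.exp (|c| / γ + 1) * (PhiExp (|f x + c| / γ) + 1)) :=
          ENNReal.ofReal_le_ofReal <|
            (monotone_phiExp hshift).trans (phiExp_add_le (by positivity) _)
      _ = K * (ENNReal.ofReal (PhiExp (|f x + c| / γ)) + 1) := by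
          rw [ENNReal.ofReal_mul (Real.exp_pos _).le, ENNReal.ofReal_add
            (phiExp_nonneg (by positivity)) zero_le_one, ENNReal.ofReal_one]
  refine ne_top_of_le_ne_top ?_ (lintegral_mono hpoint)
  rw [lintegral_const_mul' _ _ ENNReal.ofReal_ne_top,
    lintegral_add_right _ measurable_const, lintegral_const]
  exact ENNReal.mul_ne_top ENNReal.ofReal_ne_top
    (ENNReal.add_ne_top.2 ⟨hfin, ENNReal.mul_ne_top ENNReal.one_ne_top (measure_ne_top μ _)⟩)

end Modular

section Product

variable {X Y : Type*} [MeasurableSpace X] [MeasurableSpace Y] {μ : Measure X} {ν : Measure Y}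

lemma exists_lintegral_slice_ne_top [SFinite μ] [SFinite ν] (hν : ν ≠ 0)
    {g : X × Y → ENNReal} (hg : Measurable g) (h : ∫⁻ p, g p ∂μ.prod ν ≠ ⊤) :
    ∃ y, ∫⁻ x, g (x, y) ∂μ ≠ ⊤ := by
  rw [lintegral_prod_symm _ hg.aemeasurable] at h
  have : (ae ν).NeBot := ae_neBot.2 hν
  exact (ae_lt_top hg.lintegral_prod_left' h).exists.imp fun _ => LT.lt.ne

variable {α : X → ℝ} {β : Y → ℝ}

lemma MemLexp.fst_of_add [IsFiniteMeasure μ] [SFinite ν] (hν : ν ≠ 0) (hα : Measurable α)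
    (hβ : Measurable β) (h : MemLexp (μ.prod ν) fun p => α p.1 + β p.2) : MemLexp μ α := by
  obtain ⟨γ, hγ, hle⟩ := h
  obtain ⟨y, hy⟩ := exists_lintegral_slice_ne_top hν
    (((hα.comp measurable_fst).add (hβ.comp measurable_snd)).phiExp_abs_div γ)
    (ne_top_of_le_ne_top ENNReal.one_ne_top hle)
  exact memLexp_of_expModular_ne_top hα hγ (expModular_ne_top_of_add_const (β y) hγ hy)

lemma MemLexp.snd_of_add [SFinite μ] [IsFiniteMeasure ν] (hμ : μ ≠ 0) (hα : Measurable α)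
    (hβ : Measurable β) (h : MemLexp (μ.prod ν) fun p => α p.1 + β p.2) : MemLexp ν β := by
  refine MemLexp.fst_of_add hμ hβ hα ?_
  obtain ⟨γ, hγ, hle⟩ := h
  rw [← lintegral_prod_swap] at hle
  exact ⟨γ, hγ, by simpa only [Prod.fst_swap, Prod.snd_swap, add_comm] using hle⟩

end Product

/-- If `α ⊕ β : (x₁,x₂) ↦ α(x₁) + β(x₂)` belongs to `L_exp(Ω₁ × Ω₂)` for compact sets
`Ω₁, Ω₂` of positive Lebesgue measure, then `α ∈ L_exp(Ω₁)` and `β ∈ L_exp(Ω₂)`. -/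
theorem oplus_mem_Lexp_implies_components (n₁ n₂ : ℕ)
    (Ω₁ : Set (Fin n₁ → ℝ)) (Ω₂ : Set (Fin n₂ → ℝ))
    (hΩ₁ : IsCompact Ω₁) (hΩ₂ : IsCompact Ω₂)
    (hpos₁ : 0 < volume Ω₁) (hpos₂ : 0 < volume Ω₂)
    (α : (Fin n₁ → ℝ) → ℝ) (β : (Fin n₂ → ℝ) → ℝ)
    (hα : Measurable α) (hβ : Measurable β)
    (h : MemLexp (volume.restrict (Ω₁ ×ˢ Ω₂)) (fun p => α p.1 + β p.2)) :
    MemLexp (volume.restrict Ω₁) α ∧ MemLexp (volume.restrict Ω₂) β := by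
  rw [Measure.volume_eq_prod, ← Measure.prod_restrict] at h
  have : IsFiniteMeasure (volume.restrict Ω₁) := isFiniteMeasure_restrict.2 hΩ₁.measure_ne_top
  have : IsFiniteMeasure (volume.restrict Ω₂) := isFiniteMeasure_restrict.2 hΩ₂.measure_ne_top
  exact ⟨h.fst_of_add (Measure.restrict_eq_zero.not.2 hpos₂.ne') hα hβ,
    h.snd_of_add (Measure.restrict_eq_zero.not.2 hpos₁.ne') hα hβ⟩
end

section
/- The function f(x) = exp(−1/√x) belongs to L log L((0,1)) (it is bounded, hence has finite entropy), but log(f) + 1 = 1 − 1/√x does not belong to L²((0,1)) and hence not to L_exp((0,1)). In particular, the formal Gâteaux derivative of the entropy E(f) = ∫ f log f dx at f is not an element of the dual space L_exp((0,1)). -/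
open MeasureTheory

open Set

/-!
Since `f = exp(-1/√x) ≤ 1`, the integrand `f log⁺ f` vanishes identically. On the other hand
`(1 - 1/√x)² = 1 - 2 x^(-1/2) + x⁻¹`, where `x^(-1/2)` is integrable near `0` and `x⁻¹` is not,
so `1 - 1/√x ∉ L²`; and `L_exp ⊆ L²` because `s² ≤ 4 Φ_exp(s)`.
-/

lemma logPlus_exp_of_nonpos {y : ℝ} (hy : y ≤ 0) : logPlus (Real.exp y) = 0 := by
  rw [logPlus, Real.log_exp, max_eq_right hy]

lemma rpow_neg_one_eq_one_sub_inv_sqrt_sq {x : ℝ} (hx : 0 < x) :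
    x ^ (-1 : ℝ) = (1 - 1 / √x) ^ 2 - 1 + 2 * x ^ (-(1 / 2) : ℝ) := by
  rw [Real.rpow_neg_one, Real.rpow_neg hx.le, ← Real.sqrt_eq_rpow]
  nth_rewrite 1 [← Real.sq_sqrt hx.le]
  field_simp
  ring

lemma not_integrableOn_Ioo_one_sub_inv_sqrt_sq {t : ℝ} (ht : 0 < t) :
    ¬ IntegrableOn (fun x => (1 - 1 / √x) ^ 2) (Ioo 0 t) := by
  intro h
  have h_inv_sqrt : IntegrableOn (fun x : ℝ => x ^ (-(1 / 2) : ℝ)) (Ioo 0 t) :=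
    (intervalIntegral.integrableOn_Ioo_rpow_iff ht).2 (by norm_num)
  have h_inv : IntegrableOn (fun x : ℝ => x ^ (-1 : ℝ)) (Ioo 0 t) :=
    ((h.sub (integrableOn_const (by simp))).add (h_inv_sqrt.const_mul 2)).congr_fun
      (fun x hx => (rpow_neg_one_eq_one_sub_inv_sqrt_sq hx.1).symm) measurableSet_Ioo
  exact lt_irrefl _ ((intervalIntegral.integrableOn_Ioo_rpow_iff ht).1 h_inv)

lemma sq_le_four_mul_phiExp {s : ℝ} (hs : 0 ≤ s) : s ^ 2 ≤ 4 * PhiExp s := by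
  unfold PhiExp
  split_ifs with h
  · nlinarith
  · have h_half : 1 + (s - 1) / 2 ≤ Real.exp ((s - 1) / 2) := by
      linarith [Real.add_one_le_exp ((s - 1) / 2)]
    have h_sq : Real.exp (s - 1) = Real.exp ((s - 1) / 2) ^ 2 := by
      rw [← Real.exp_nat_mul]; ring_nf
    nlinarith

section

variable {X : Type*} [MeasurableSpace X] {μ : Measure X} {f : X → ℝ}

lemma MemLexp.integrable_sq (h : MemLexp μ f) (hf : AEStronglyMeasurable f μ) :
    Integrable (fun x => f x ^ 2) μ := by
  obtain ⟨γ, hγ, h_modular⟩ := h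
  refine ⟨hf.pow 2, ?_⟩
  have h_pointwise (x : X) : ENNReal.ofReal (f x ^ 2) ≤
      ENNReal.ofReal (4 * γ ^ 2) * ENNReal.ofReal (PhiExp (|f x| / γ)) := by
    rw [← ENNReal.ofReal_mul (by positivity)]
    refine ENNReal.ofReal_le_ofReal ?_
    have h_scaled := sq_le_four_mul_phiExp (div_nonneg (abs_nonneg (f x)) hγ.le)
    rw [div_pow, sq_abs, div_le_iff₀ (by positivity)] at h_scaled
    linarith
  rw [hasFiniteIntegral_iff_ofReal (ae_of_all _ fun x => sq_nonneg _)]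
  calc ∫⁻ x, ENNReal.ofReal (f x ^ 2) ∂μ
      ≤ ∫⁻ x, ENNReal.ofReal (4 * γ ^ 2) * ENNReal.ofReal (PhiExp (|f x| / γ)) ∂μ :=
        lintegral_mono h_pointwise
    _ = ENNReal.ofReal (4 * γ ^ 2) * ∫⁻ x, ENNReal.ofReal (PhiExp (|f x| / γ)) ∂μ :=
        lintegral_const_mul' _ _ ENNReal.ofReal_ne_top
    _ < ⊤ := ENNReal.mul_lt_top ENNReal.ofReal_lt_top (h_modular.trans_lt ENNReal.one_lt_top)

lemma MemLexp.memLp_two (h : MemLexp μ f) (hf : AEStronglyMeasurable f μ) : MemLp f 2 μ :=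
  (memLp_two_iff_integrable_sq hf).2 (h.integrable_sq hf)

end

/-- The function `f(x) = exp(-1/√x)` belongs to `L log L((0,1))`, but its formal
entropy gradient `log f + 1 = 1 - 1/√x` is neither in `L²((0,1))` nor in `L_exp((0,1))`. -/
theorem entropy_not_gateaux_differentiable :
    (∫⁻ x in Set.Ioo (0:ℝ) 1,
        ENNReal.ofReal (Real.exp (-(1 / Real.sqrt x)) *
          logPlus (Real.exp (-(1 / Real.sqrt x)))) < ⊤) ∧
    ¬ MemLp (fun x : ℝ => 1 - 1 / Real.sqrt x) 2 (volume.restrict (Set.Ioo 0 1)) ∧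
    ¬ MemLexp (volume.restrict (Set.Ioo (0:ℝ) 1)) (fun x => 1 - 1 / Real.sqrt x) := by
  have h_entropy_zero (x : ℝ) :
      Real.exp (-(1 / √x)) * logPlus (Real.exp (-(1 / √x))) = 0 := by
    rw [logPlus_exp_of_nonpos (neg_nonpos.2 (by positivity)), mul_zero]
  have h_meas : AEStronglyMeasurable (fun x : ℝ => 1 - 1 / √x)
      (volume.restrict (Ioo 0 1)) :=
    (by fun_prop : Measurable fun x : ℝ => 1 - 1 / √x).aestronglyMeasurable
  have h_not_L2 : ¬ MemLp (fun x : ℝ => 1 - 1 / √x) 2 (volume.restrict (Ioo 0 1)) := fun h =>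
    not_integrableOn_Ioo_one_sub_inv_sqrt_sq one_pos ((memLp_two_iff_integrable_sq h_meas).1 h)
  refine ⟨?_, h_not_L2, fun h => h_not_L2 (h.memLp_two h_meas)⟩
  simp only [h_entropy_zero, ENNReal.ofReal_zero, lintegral_zero, ENNReal.zero_lt_top]
end
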